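/- Let X_1 and X_2 be Polish metric spaces (complete separable metric spaces), let μ be a Borel probability measure on X_1, and let F_n, F : X_1 → X_2 be Borel maps. If the measures (Id, F_n)_#μ converge narrowly to (Id, F)_#μ in the space of Borel probability measures on X_1×X_2, then F_n converges to F in μ-measure, i.e. for every ε > 0, μ({x ∈ X_1 : d_{X_2}(F_n(x), F(x)) > ε}) → 0 as n → ∞. -/

import Mathlib

/-!
By Lusin's theorem `F` is continuous on a closed set `K` of almost full measure. Then
`A = {(x, y) | x ∈ K, ε ≤ d(y, F x)}` is closed and `(Id, F)_#μ`-null, so by the portmanteau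
theorem `(Id, F_n)_#μ (A) = μ {x ∈ K | ε ≤ d(F_n x, F x)}` tends to `0`; off `K` only a set of
small measure is left.
-/

open MeasureTheory Set Filter Topology
open scoped ENNReal NNReal

noncomputable section

/-- Euclidean space `ℝ^d`. -/
abbrev Euc (d : ℕ) : Type := EuclideanSpace ℝ (Fin d)

variable {d : ℕ}

/-- Weak-star (`L^∞` in duality with `L^1`) continuity of `t ↦ ρ t` on `[a, c]`. -/
def WeakStarCont (a c : ℝ) (ρ : ℝ → Euc d → ℝ) : Prop :=
  ∀ g : Euc d → ℝ, Integrable g →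
    ContinuousOn (fun t => ∫ x, ρ t x * g x) (Icc a c)

/-- `ρ` solves the continuity equation `∂ₜ ρ + div (b ρ) = 0` on `(a,c) × U`
in the sense of distributions. -/
def SolvesCE (b : ℝ → Euc d → Euc d) (U : Set (Euc d)) (a c : ℝ)
    (ρ : ℝ → Euc d → ℝ) : Prop :=
  ∀ φ : ℝ × Euc d → ℝ, ContDiff ℝ (⊤ : ℕ∞) φ → HasCompactSupport φ →
    tsupport φ ⊆ Ioo a c ×ˢ U →
    ∫ t in Ioo a c, ∫ x, ρ t x * (fderiv ℝ φ (t, x)) (1, b t x) = 0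

/-- The class `𝓛_{[a,c],Ω}`: bounded, nonnegative, with compact support in `[a,c] × Ω`. -/
def MemL (Ω : Set (Euc d)) (a c : ℝ) (ρ : ℝ → Euc d → ℝ) : Prop :=
  Measurable (Function.uncurry ρ) ∧ (∀ t x, 0 ≤ ρ t x) ∧ (∃ M : ℝ, ∀ t x, ρ t x ≤ M) ∧
    ∃ K : Set (ℝ × Euc d), IsCompact K ∧ K ⊆ Icc a c ×ˢ Ω ∧
      ∀ t ∈ Icc a c, ∀ x, ρ t x ≠ 0 → (t, x) ∈ K

/-- Assumption (a-Ω): local integrability of `b` on `(0,T) × Ω`. -/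
def AssumptionA (b : ℝ → Euc d → Euc d) (T : ℝ) (Ω : Set (Euc d)) : Prop :=
  ∀ Ω' : Set (Euc d), IsOpen Ω' → closure Ω' ⊆ Ω → IsCompact (closure Ω') →
    IntegrableOn (fun p : ℝ × Euc d => b p.1 p.2) (Ioo 0 T ×ˢ Ω')

/-- Assumption (b-Ω): uniqueness of bounded nonnegative compactly supported
weakly-star continuous solutions of the continuity equation. -/
def AssumptionB (b : ℝ → Euc d → Euc d) (T : ℝ) (Ω : Set (Euc d)) : Prop :=
  ∀ a c : ℝ, 0 ≤ a → a ≤ c → c ≤ T → ∀ ρ₁ ρ₂ : ℝ → Euc d → ℝ,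
    MemL Ω a c ρ₁ → MemL Ω a c ρ₂ →
    WeakStarCont a c ρ₁ → WeakStarCont a c ρ₂ →
    SolvesCE b Ω a c ρ₁ → SolvesCE b Ω a c ρ₂ →
    ρ₁ a =ᵐ[(volume : Measure (Euc d))] ρ₂ a →
    ∀ t ∈ Icc a c, ρ₁ t =ᵐ[(volume : Measure (Euc d))] ρ₂ t

/-- One-sided distributional divergence bound `div b(t,·) ≥ m(t)` on `Ω'`, with `∫₀ᵀ |m| = L`. -/
def DivBound (b : ℝ → Euc d → Euc d) (T : ℝ) (Ω' : Set (Euc d)) (L : ℝ) : Prop :=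
  ∃ m : ℝ → ℝ, IntegrableOn m (Ioo 0 T) ∧ (∫ t in Ioo 0 T, |m t|) = L ∧
    ∀ᵐ t ∂(volume.restrict (Ioo 0 T)),
      ∀ φ : Euc d → ℝ, ContDiff ℝ (⊤ : ℕ∞) φ → HasCompactSupport φ →
        tsupport φ ⊆ Ω' → (∀ x, 0 ≤ φ x) →
        ∫ x in Ω', (fderiv ℝ φ x) (b t x) ≤ - m t * ∫ x in Ω', φ x

/-- Hitting time of a curve `γ` (defined on `[s, τ)`) in the set `A`:
the supremum of times `t` such that `γ([s,t])` is contained in a compact subset of `A`. -/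
def hitTime (A : Set (Euc d)) (s τ : ℝ) (γ : ℝ → Euc d) : ℝ :=
  sSup {t : ℝ | s ≤ t ∧ t < τ ∧
    ∃ K : Set (Euc d), IsCompact K ∧ K ⊆ A ∧ ∀ r ∈ Icc s t, γ r ∈ K}

/-- Local regular flow starting from `B` up to time `τ`. -/
structure IsLocRegFlow (b : ℝ → Euc d → Euc d) (B : Set (Euc d)) (τ : ℝ)
    (X : ℝ → Euc d → Euc d) : Prop where
  mble : Measurable (Function.uncurry X)
  ae_sol : ∀ᵐ x ∂(volume.restrict B), X 0 x = x ∧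
    IntegrableOn (fun s => b s (X s x)) (Ioc 0 τ) ∧
    ∀ t ∈ Icc 0 τ, X t x = x + ∫ s in (0:ℝ)..t, b s (X s x)
  compress : ∃ C : ℝ≥0, ∀ t ∈ Icc 0 τ,
    (volume.restrict B).map (X t) ≤ (C : ℝ≥0∞) • volume

/-- Maximal regular flow of `b` in `Ω`, with initial time `s` and final horizon `T`. -/
structure IsMaxRegFlowFrom (b : ℝ → Euc d → Euc d) (s T : ℝ) (Ω : Set (Euc d))
    (V : Euc d → ℝ) (X : ℝ → Euc d → Euc d) (TX : Euc d → ℝ) : Prop where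
  mble : Measurable (Function.uncurry X)
  mbleT : Measurable TX
  time_mem : ∀ x ∈ Ω, s < TX x ∧ TX x ≤ T
  ae_sol : ∀ᵐ x ∂(volume.restrict Ω), X s x = x ∧
    ∀ τ ∈ Ico s (TX x), IntegrableOn (fun r => b r (X r x)) (Ioc s τ) ∧
      ∀ t ∈ Icc s τ, X t x = x + ∫ r in s..t, b r (X r x)
  compress : ∀ Ω' : Set (Euc d), IsOpen Ω' → closure Ω' ⊆ Ω → IsCompact (closure Ω') →
    ∃ C : ℝ≥0, ∀ t ∈ Icc s T,
      (volume.restrict {x | x ∈ Ω' ∧ t < hitTime Ω' s (TX x) (fun r => X r x)}).map (X t)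
        ≤ (C : ℝ≥0∞) • volume
  blowup : ∀ᵐ x ∂(volume.restrict Ω), TX x < T →
    ∀ M : ℝ, ∀ u ∈ Ico s (TX x), ∃ t ∈ Ioo u (TX x), M < V (X t x)

/-- Maximal regular flow of `b` in `Ω` (initial time `0`). -/
abbrev IsMaxRegFlow (b : ℝ → Euc d → Euc d) (T : ℝ) (Ω : Set (Euc d))
    (V : Euc d → ℝ) (X : ℝ → Euc d → Euc d) (TX : Euc d → ℝ) : Prop :=
  IsMaxRegFlowFrom b 0 T Ω V X TX

/-- Admissible confining potential: continuous, nonnegative, blowing up at `∂Ω`. -/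
def AdmissiblePotential (Ω : Set (Euc d)) (V : Euc d → ℝ) : Prop :=
  ContinuousOn V Ω ∧ (∀ x ∈ Ω, 0 ≤ V x) ∧
    ∀ M : ℝ, ∃ K : Set (Euc d), IsCompact K ∧ K ⊆ Ω ∧ ∀ x ∈ Ω \ K, M < V x

/-- The space of continuous paths `[0,T] → ℝ^d`. -/
abbrev PathSp (d : ℕ) (T : ℝ) : Type := C(Icc (0:ℝ) T, Euc d)

instance pathMeasurableSpace (d : ℕ) (T : ℝ) : MeasurableSpace (PathSp d T) := borel _
instance pathBorelSpace (d : ℕ) (T : ℝ) : BorelSpace (PathSp d T) := ⟨rfl⟩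

/-- Evaluation of a path at time `t` (via the projection of `ℝ` onto `[0,T]`). -/
def ev {T : ℝ} (hT : (0:ℝ) ≤ T) (t : ℝ) (γ : PathSp d T) : Euc d :=
  γ (projIcc 0 T hT t)

/-- A path is an absolutely continuous integral curve of `b` on `[0,T]`. -/
def PathSolODE {T : ℝ} (hT : (0:ℝ) ≤ T) (b : ℝ → Euc d → Euc d) (γ : PathSp d T) : Prop :=
  IntegrableOn (fun s => b s (ev hT s γ)) (Ioc 0 T) ∧
    ∀ t ∈ Icc (0:ℝ) T, ev hT t γ = ev hT 0 γ + ∫ s in (0:ℝ)..t, b s (ev hT s γ)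

/-- Regular generalized flow of `c` in `closure A`, with compressibility constant `C`. -/
structure IsRegGenFlow {T : ℝ} (hT : (0:ℝ) ≤ T) (c : ℝ → Euc d → Euc d) (A : Set (Euc d))
    (η : Measure (PathSp d T)) (C : ℝ≥0) : Prop where
  prob : IsProbabilityMeasure η
  conc : η {γ | ¬ ((∀ t ∈ Icc (0:ℝ) T, ev hT t γ ∈ closure A) ∧ PathSolODE hT c γ)} = 0
  poz : 0 < C
  compress : ∀ t ∈ Icc (0:ℝ) T, (η.map (ev hT t)).restrict A ≤ (C : ℝ≥0∞) • volume

/-- Pointwise divergence of a (smooth) vector field: trace of the spatial differential. -/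
def divergence (b : ℝ → Euc d → Euc d) (t : ℝ) (x : Euc d) : ℝ :=
  LinearMap.trace ℝ (Euc d) (fderiv ℝ (fun y => b t y) x : Euc d →ₗ[ℝ] Euc d)

/-- `A^ε`: the points of `A` at distance at least `ε` from the complement of `A`. -/
def innerSet (A : Set (Euc d)) (ε : ℝ) : Set (Euc d) :=
  {x ∈ A | ε ≤ Metric.infDist x Aᶜ}

theorem MeasurableSet.exists_isClosed_isOpen_inter_eq_measure_compl_lt
    {X : Type*} [TopologicalSpace X] [MeasurableSpace X] [OpensMeasurableSpace X]
    (μ : Measure X) [IsFiniteMeasure μ] [μ.WeaklyRegular] {s : Set X}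
    (hs : MeasurableSet s) {ε : ℝ≥0∞} (hε : ε ≠ 0) :
    ∃ K O : Set X, IsClosed K ∧ IsOpen O ∧ K ∩ O = K ∩ s ∧ μ Kᶜ < ε := by
  obtain ⟨C, hCs, hC, hCμ⟩ :=
    hs.exists_isClosed_sdiff_lt (measure_ne_top μ s) (ENNReal.half_pos hε).ne'
  obtain ⟨D, hDs, hD, hDμ⟩ :=
    hs.compl.exists_isClosed_sdiff_lt (measure_ne_top μ sᶜ) (ENNReal.half_pos hε).ne'
  -- On `C ∪ D`, with `C ⊆ s` and `D ⊆ sᶜ`, the set `s` is the open set `Dᶜ`.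
  refine ⟨C ∪ D, Dᶜ, hC.union hD, hD.isOpen_compl, ?_, ?_⟩
  · ext x
    have := @hCs x
    have := @hDs x
    simp only [mem_inter_iff, mem_union, mem_compl_iff]
    tauto
  · calc μ (C ∪ D)ᶜ ≤ μ ((s \ C) ∪ (sᶜ \ D)) := measure_mono fun x hx => by
          simp only [mem_compl_iff, mem_union, not_or] at hx
          by_cases hxs : x ∈ s
          exacts [Or.inl ⟨hxs, hx.1⟩, Or.inr ⟨hxs, hx.2⟩]
      _ ≤ μ (s \ C) + μ (sᶜ \ D) := measure_union_le _ _
      _ < ε / 2 + ε / 2 := ENNReal.add_lt_add hCμ hDμ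
      _ = ε := ENNReal.add_halves ε

theorem Measurable.exists_isClosed_measure_compl_le_continuousOn
    {X Y : Type*} [TopologicalSpace X] [MeasurableSpace X] [OpensMeasurableSpace X]
    [TopologicalSpace Y] [SecondCountableTopology Y] [MeasurableSpace Y] [OpensMeasurableSpace Y]
    (μ : Measure X) [IsFiniteMeasure μ] [μ.WeaklyRegular]
    {f : X → Y} (hf : Measurable f) {ε : ℝ≥0∞} (hε : ε ≠ 0) :
    ∃ K : Set X, IsClosed K ∧ μ Kᶜ ≤ ε ∧ ContinuousOn f K := by
  let B := TopologicalSpace.countableBasis Y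
  have : Countable B := (TopologicalSpace.countable_countableBasis Y).to_subtype
  obtain ⟨ε', hε'0, hε'ε⟩ := ENNReal.exists_pos_sum_of_countable' hε B
  choose K O hK hO hKO hKμ using fun U : B =>
    (hf (TopologicalSpace.isOpen_of_mem_countableBasis U.2).measurableSet
      ).exists_isClosed_isOpen_inter_eq_measure_compl_lt μ (hε'0 U).ne'
  refine ⟨⋂ U, K U, isClosed_iInter hK, ?_, ?_⟩
  · rw [compl_iInter]
    exact (measure_iUnion_le _).trans
      ((ENNReal.tsum_le_tsum fun U => (hKμ U).le).trans hε'ε.le)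
  · rw [continuousOn_iff_continuous_domRestrict,
      (TopologicalSpace.isBasis_countableBasis Y).continuous_iff]
    intro U hU
    convert (hO ⟨U, hU⟩).preimage continuous_subtype_val using 1
    ext ⟨x, hx⟩
    have := congrArg (x ∈ ·) (hKO ⟨U, hU⟩)
    simp only [mem_inter_iff, mem_iInter.1 hx ⟨U, hU⟩, true_and, mem_preimage] at this
    simp [this]

theorem ContinuousOn.isClosed_setOf_mem_le_dist {X Y : Type*} [TopologicalSpace X]
    [PseudoMetricSpace Y] {f : X → Y} {K : Set X} (hf : ContinuousOn f K) (hK : IsClosed K)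
    (ε : ℝ) : IsClosed {p : X × Y | p.1 ∈ K ∧ ε ≤ dist p.2 (f p.1)} :=
  (continuous_dist.comp_continuousOn (continuousOn_snd.prodMk (hf.comp continuousOn_fst
    fun _ hp => hp))).preimage_isClosed_of_isClosed (hK.preimage continuous_fst) isClosed_Ici

theorem MeasureTheory.ProbabilityMeasure.tendsto_measure_zero_of_isClosed_of_measure_eq_zero
    {Ω ι : Type*} {L : Filter ι} [MeasurableSpace Ω] [TopologicalSpace Ω]
    [OpensMeasurableSpace Ω] [HasOuterApproxClosed Ω] {μ : ProbabilityMeasure Ω}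
    {μs : ι → ProbabilityMeasure Ω} (hμs : Tendsto μs L (𝓝 μ)) {A : Set Ω} (hA : IsClosed A)
    (hμA : (μ : Measure Ω) A = 0) :
    Tendsto (fun i => (μs i : Measure Ω) A) L (𝓝 0) :=
  hμA ▸ tendsto_measure_of_null_frontier_of_tendsto' hμs
    (measure_mono_null hA.frontier_subset hμA)

theorem tendsto_measure_setOf_mem_le_dist_of_tendsto_integral_graph
    {X Y ι : Type*} [PseudoMetricSpace X] [PseudoMetricSpace Y] [SecondCountableTopologyEither X Y]
    [MeasurableSpace X] [OpensMeasurableSpace X] [MeasurableSpace Y] [OpensMeasurableSpace Y]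
    {L : Filter ι} (μ : ProbabilityMeasure X) {fs : ι → X → Y} {f : X → Y}
    (hfs : ∀ i, Measurable (fs i)) (hf : Measurable f)
    (h : ∀ g : BoundedContinuousFunction (X × Y) ℝ,
      Tendsto (fun i => ∫ p, g p ∂(μ : Measure X).map (fun x => (x, fs i x)))
        L (𝓝 (∫ p, g p ∂(μ : Measure X).map (fun x => (x, f x)))))
    {K : Set X} (hK : IsClosed K) (hfK : ContinuousOn f K) {ε : ℝ} (hε : 0 < ε) :
    Tendsto (fun i => (μ : Measure X) {x | x ∈ K ∧ ε ≤ dist (fs i x) (f x)}) L (𝓝 0) := by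
  have hgraph (g : X → Y) (hg : Measurable g) : Measurable fun x => (x, g x) :=
    measurable_id.prodMk hg
  have hconv : Tendsto (fun i => μ.map (hgraph _ (hfs i)).aemeasurable) L
      (𝓝 (μ.map (hgraph f hf).aemeasurable)) :=
    ProbabilityMeasure.tendsto_iff_forall_integral_tendsto.2 h
  have hA := hfK.isClosed_setOf_mem_le_dist hK ε
  have hlim := ProbabilityMeasure.tendsto_measure_zero_of_isClosed_of_measure_eq_zero hconv hA <| by
    rw [ProbabilityMeasure.toMeasure_map, Measure.map_apply (hgraph f hf) hA.measurableSet]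
    simp [hε.not_ge]
  simpa only [ProbabilityMeasure.toMeasure_map,
    Measure.map_apply (hgraph _ (hfs _)) hA.measurableSet, preimage_ofPred_eq] using hlim

theorem convergence_in_measure_of_narrow_general
    {X₁ X₂ : Type*} [MetricSpace X₁]
    [MetricSpace X₂] [TopologicalSpace.SeparableSpace X₂]
    [MeasurableSpace X₁] [BorelSpace X₁] [MeasurableSpace X₂] [BorelSpace X₂]
    (μ : Measure X₁) [IsProbabilityMeasure μ]
    (Fn : ℕ → X₁ → X₂) (F : X₁ → X₂)
    (hFn : ∀ n, Measurable (Fn n)) (hF : Measurable F)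
    (hnarrow : ∀ f : BoundedContinuousFunction (X₁ × X₂) ℝ,
      Tendsto (fun n => ∫ p, f p ∂(μ.map (fun x => (x, Fn n x))))
        atTop (𝓝 (∫ p, f p ∂(μ.map (fun x => (x, F x)))))) :
    ∀ ε > (0:ℝ), Tendsto (fun n => μ {x | ε < dist (Fn n x) (F x)}) atTop (𝓝 0) := by
  intro ε hε
  have : SecondCountableTopology X₂ := UniformSpace.secondCountable_of_separable X₂
  refine ENNReal.tendsto_nhds_zero.2 fun η hη => ?_
  obtain ⟨K, hK, hKμ, hFK⟩ :=
    hF.exists_isClosed_measure_compl_le_continuousOn μ (ENNReal.half_pos hη.ne').ne'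
  have hgood := tendsto_measure_setOf_mem_le_dist_of_tendsto_integral_graph ⟨μ, ‹_›⟩ hFn hF
    hnarrow hK hFK hε
  filter_upwards [(ENNReal.tendsto_nhds_zero.1 hgood) (η / 2) (ENNReal.half_pos hη.ne')]
    with n hn
  calc μ {x | ε < dist (Fn n x) (F x)}
      ≤ μ ({x | x ∈ K ∧ ε ≤ dist (Fn n x) (F x)} ∪ Kᶜ) := measure_mono fun x hx => by
        by_cases hxK : x ∈ K
        exacts [Or.inl ⟨hxK, le_of_lt hx⟩, Or.inr hxK]
    _ ≤ μ {x | x ∈ K ∧ ε ≤ dist (Fn n x) (F x)} + μ Kᶜ := measure_union_le _ _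
    _ ≤ η / 2 + η / 2 := add_le_add hn hKμ
    _ = η := ENNReal.add_halves η

/-- Convergence in measure from narrow convergence of the graphs, Lemma 6.6. -/
theorem convergence_in_measure_of_narrow
    {X₁ X₂ : Type*} [MetricSpace X₁] [CompleteSpace X₁]
    [TopologicalSpace.SeparableSpace X₁]
    [MetricSpace X₂] [CompleteSpace X₂] [TopologicalSpace.SeparableSpace X₂]
    [MeasurableSpace X₁] [BorelSpace X₁] [MeasurableSpace X₂] [BorelSpace X₂]
    (μ : Measure X₁) [IsProbabilityMeasure μ]
    (Fn : ℕ → X₁ → X₂) (F : X₁ → X₂)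
    (hFn : ∀ n, Measurable (Fn n)) (hF : Measurable F)
    (hnarrow : ∀ f : BoundedContinuousFunction (X₁ × X₂) ℝ,
      Tendsto (fun n => ∫ p, f p ∂(μ.map (fun x => (x, Fn n x))))
        atTop (𝓝 (∫ p, f p ∂(μ.map (fun x => (x, F x)))))) :
    ∀ ε > (0:ℝ), Tendsto (fun n => μ {x | ε < dist (Fn n x) (F x)}) atTop (𝓝 0) :=
  convergence_in_measure_of_narrow_general μ Fn F hFn hF hnarrow
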